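/- arXiv:2302.03015 — 9 statements merged into one kernel-verified Lean document; each statement's English description precedes it below -/
import Mathlib

section
/- Let E and F be real normed vector spaces, let x ∈ E, and let x̂ : ℝ → E and θ : ℝ → F be curves that are differentiable at t₀ with derivatives x̂'(t₀) and θ'(t₀). Assume: (i) φ : E × F → ℝ satisfies φ(x̂(t), θ(t)) = 0 for all t in a neighborhood of t₀; (ii) φ is Fréchet differentiable at (x̂(t₀), θ(t₀)) with derivative L, and write D_x for the continuous linear map v ↦ L(v, 0) and D_θ for w ↦ L(0, w); (iii) x̂(t₀) ≠ x and the map z ↦ ‖z − x‖ is Fréchet differentiable at x̂(t₀) with derivative D_N; (iv) there is a real λ > 0 with D_x = −λ • D_N. Then the map t ↦ ‖x̂(t) − x‖ is differentiable at t₀ with derivative equal to D_θ(θ'(t₀)) / ‖D_x‖, where ‖D_x‖ denotes the operator norm of D_x. -/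
/-- Closed-form expression for the speed of the decision boundary (general normed-space form). -/
theorem speed_of_decision_boundary
    {E F : Type*} [NormedAddCommGroup E] [NormedSpace ℝ E]
    [NormedAddCommGroup F] [NormedSpace ℝ F]
    (x : E) (xhat : ℝ → E) (θ : ℝ → F) (t₀ : ℝ)
    (xhat' : E) (θ' : F)
    (hxhat : HasDerivAt xhat xhat' t₀)
    (hθ : HasDerivAt θ θ' t₀)
    (φ : E × F → ℝ)
    (hzero : ∀ᶠ t in nhds t₀, φ (xhat t, θ t) = 0)
    (L : E × F →L[ℝ] ℝ)
    (hφ : HasFDerivAt φ L (xhat t₀, θ t₀))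
    (Dx : E →L[ℝ] ℝ) (Dθ : F →L[ℝ] ℝ)
    (hDx : ∀ v : E, Dx v = L (v, 0))
    (hDθ : ∀ w : F, Dθ w = L (0, w))
    (hne : xhat t₀ ≠ x)
    (DN : E →L[ℝ] ℝ)
    (hDN : HasFDerivAt (fun z : E => ‖z - x‖) DN (xhat t₀))
    (lam : ℝ) (hlam : 0 < lam)
    (hKKT : Dx = (-lam) • DN) :
    HasDerivAt (fun t => ‖xhat t - x‖) (Dθ θ' / ‖Dx‖) t₀ := by
  set u : E := xhat t₀ - x with hu
  have hu0 : u ≠ 0 := sub_ne_zero.mpr hne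
  have hunorm : (0:ℝ) < ‖u‖ := norm_pos_iff.mpr hu0
  -- main derivative via chain rule
  have hmain : HasDerivAt (fun t => ‖xhat t - x‖) (DN xhat') t₀ :=
    hDN.comp_hasDerivAt t₀ hxhat
  -- chain rule for φ ∘ (x̂, θ): derivative L (x̂', θ')
  have hφc : HasDerivAt (fun t => φ (xhat t, θ t)) (L (xhat', θ')) t₀ :=
    hφ.comp_hasDerivAt t₀ (hxhat.prodMk hθ)
  have hLzero : L (xhat', θ') = 0 := by
    have h0 : HasDerivAt (fun _ : ℝ => (0:ℝ)) (L (xhat', θ')) t₀ :=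
      hφc.congr_of_eventuallyEq (hzero.mono fun t ht => ht.symm)
    exact h0.unique (hasDerivAt_const t₀ 0)
  have hsplit : Dx xhat' + Dθ θ' = 0 := by
    rw [hDx, hDθ, ← map_add]
    simpa using hLzero
  -- DN u = ‖u‖
  have hDNu : DN u = ‖u‖ := by
    have hg : HasDerivAt (fun s : ℝ => xhat t₀ + s • u) u 0 := by
      simpa using ((hasDerivAt_id (0:ℝ)).smul_const u).const_add (xhat t₀)
    have hDN' : HasFDerivAt (fun z : E => ‖z - x‖) DN ((fun s : ℝ => xhat t₀ + s • u) 0) := by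
      simpa using hDN
    have hc : HasDerivAt (fun s : ℝ => ‖(xhat t₀ + s • u) - x‖) (DN u) 0 :=
      HasFDerivAt.comp_hasDerivAt (l := fun z : E => ‖z - x‖) (f := fun s : ℝ => xhat t₀ + s • u) 0 hDN' hg
    have heq : (fun s : ℝ => ‖(xhat t₀ + s • u) - x‖) =ᶠ[nhds (0:ℝ)]
        fun s => (1 + s) * ‖u‖ := by
      have hev : ∀ᶠ s : ℝ in nhds 0, (-1:ℝ) < s :=
        eventually_gt_nhds (by norm_num)
      filter_upwards [hev] with s hs
      have h1 : xhat t₀ + s • u - x = (1 + s) • u := by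
        rw [add_smul, one_smul, hu]; abel
      rw [h1, norm_smul, Real.norm_eq_abs, abs_of_pos (by linarith)]
    have hc' : HasDerivAt (fun s : ℝ => (1 + s) * ‖u‖) (DN u) 0 :=
      hc.congr_of_eventuallyEq heq.symm
    have hc'' : HasDerivAt (fun s : ℝ => (1 + s) * ‖u‖) ‖u‖ 0 := by
      simpa using ((hasDerivAt_id (0:ℝ)).const_add 1).mul_const ‖u‖
    exact hc'.unique hc''
  -- ‖DN‖ = 1
  have hDNle : ‖DN‖ ≤ 1 := by
    have hlip : LipschitzWith 1 (fun z : E => ‖z - x‖) := by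
      have h := LipschitzWith.dist_left x
      simpa [dist_eq_norm] using h
    simpa using hDN.le_of_lipschitz hlip
  have hDNge : 1 ≤ ‖DN‖ := by
    have h := DN.le_opNorm u
    rw [hDNu, Real.norm_eq_abs, abs_of_pos hunorm] at h
    nlinarith
  have hDNnorm : ‖DN‖ = 1 := le_antisymm hDNle hDNge
  -- ‖Dx‖ = lam
  have hDxnorm : ‖Dx‖ = lam := by
    rw [hKKT]
    simp [norm_smul, abs_of_pos hlam, hDNnorm]
  -- Dx x̂' = -lam * DN x̂'
  have hDxv : Dx xhat' = -lam * DN xhat' := by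
    rw [hKKT]; simp
  have : DN xhat' = Dθ θ' / ‖Dx‖ := by
    rw [hDxnorm]
    have : -lam * DN xhat' + Dθ θ' = 0 := by rw [← hDxv]; exact hsplit
    field_simp
    linarith
  rwa [this] at hmain
end

section
/- Let E and F be real inner product spaces, let x ∈ E, and let x̂ : ℝ → E and θ : ℝ → F be curves differentiable at t₀ with derivatives x̂'(t₀) and θ'(t₀). Assume: (i) φ : E × F → ℝ satisfies φ(x̂(t), θ(t)) = 0 for all t in a neighborhood of t₀; (ii) φ is Fréchet differentiable at (x̂(t₀), θ(t₀)) with derivative L, and there are vectors g_x ∈ E and g_θ ∈ F such that L(v, w) = ⟪g_x, v⟫ + ⟪g_θ, w⟫ for all (v, w); (iii) x̂(t₀) ≠ x; (iv) there is a real c > 0 with g_x = c • (x − x̂(t₀)). Then the map t ↦ ‖x̂(t) − x‖ is differentiable at t₀ with derivative equal to ⟪g_θ, θ'(t₀)⟫ / ‖g_x‖. -/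
open RealInnerProductSpace

/-- Closed-form expression for the speed of the decision boundary, p = 2 case. -/
theorem speed_of_decision_boundary_inner
    {E F : Type*} [NormedAddCommGroup E] [InnerProductSpace ℝ E]
    [NormedAddCommGroup F] [InnerProductSpace ℝ F]
    (x : E) (xhat : ℝ → E) (θ : ℝ → F) (t₀ : ℝ)
    (xhat' : E) (θ' : F)
    (hxhat : HasDerivAt xhat xhat' t₀)
    (hθ : HasDerivAt θ θ' t₀)
    (φ : E × F → ℝ)
    (hzero : ∀ᶠ t in nhds t₀, φ (xhat t, θ t) = 0)
    (L : E × F →L[ℝ] ℝ)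
    (hφ : HasFDerivAt φ L (xhat t₀, θ t₀))
    (gx : E) (gθ : F)
    (hL : ∀ (v : E) (w : F), L (v, w) = ⟪gx, v⟫ + ⟪gθ, w⟫)
    (hne : xhat t₀ ≠ x)
    (c : ℝ) (hc : 0 < c) (hgx : gx = c • (x - xhat t₀)) :
    HasDerivAt (fun t => ‖xhat t - x‖) (⟪gθ, θ'⟫ / ‖gx‖) t₀ := by
  set y : E := xhat t₀ - x with hy
  have hyne : y ≠ 0 := sub_ne_zero.mpr hne
  have hny : ‖y‖ ≠ 0 := norm_ne_zero_iff.mpr hyne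
  -- chain rule for φ along the curve
  have hcurve : HasDerivAt (fun t => (xhat t, θ t)) (xhat', θ') t₀ := hxhat.prodMk hθ
  have hcomp : HasDerivAt (fun t => φ (xhat t, θ t)) (L (xhat', θ')) t₀ :=
    hφ.comp_hasDerivAt t₀ hcurve
  have hzero' : HasDerivAt (fun t => φ (xhat t, θ t)) 0 t₀ :=
    (hasDerivAt_const t₀ (0:ℝ)).congr_of_eventuallyEq (hzero.mono fun t ht => ht)
  have hL0 : ⟪gx, xhat'⟫ + ⟪gθ, θ'⟫ = 0 := by
    rw [← hL xhat' θ']; exact hcomp.unique hzero'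
  -- inner product identity
  have hinner : ⟪gx, xhat'⟫ = -(c * ⟪y, xhat'⟫) := by
    rw [hgx, real_inner_smul_left]
    have : x - xhat t₀ = -y := by simp [hy]
    rw [this, inner_neg_left]; ring
  have hkey : ⟪y, xhat'⟫ = ⟪gθ, θ'⟫ / c := by
    field_simp
    nlinarith [hL0, hinner]
  have hngx : ‖gx‖ = c * ‖y‖ := by
    rw [hgx, norm_smul, Real.norm_eq_abs, abs_of_pos hc]
    congr 1
    rw [hy, ← neg_sub, norm_neg]
  -- derivative of the norm via sqrt of norm squared
  have hsub : HasDerivAt (fun t => xhat t - x) xhat' t₀ := hxhat.sub_const x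
  have hsq : HasDerivAt (fun t => ‖xhat t - x‖ ^ 2) (2 * ⟪y, xhat'⟫) t₀ := hsub.norm_sq
  have hsqrt : HasDerivAt (fun t => Real.sqrt (‖xhat t - x‖ ^ 2))
      (1 / (2 * Real.sqrt (‖y‖ ^ 2)) * (2 * ⟪y, xhat'⟫)) t₀ := by
    have h0 : ‖xhat t₀ - x‖ ^ 2 ≠ 0 := pow_ne_zero _ hny
    exact (Real.hasDerivAt_sqrt h0).comp t₀ hsq
  have heq : (fun t => Real.sqrt (‖xhat t - x‖ ^ 2)) = fun t => ‖xhat t - x‖ := by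
    funext t; rw [Real.sqrt_sq (norm_nonneg _)]
  rw [heq] at hsqrt
  convert hsqrt using 1
  rw [Real.sqrt_sq (norm_nonneg _), hkey, hngx]
  field_simp
end

section
/- Let n ≥ 1, equip ℝⁿ (i.e., Fin n → ℝ) with the sup norm ‖v‖∞ = max_k |v_k|, let F be a real normed space, let x ∈ ℝⁿ, and let x̂ : ℝ → ℝⁿ and θ : ℝ → F be curves differentiable at t₀ with derivatives x̂'(t₀) and θ'(t₀). Assume: (i) φ : ℝⁿ × F → ℝ satisfies φ(x̂(t), θ(t)) = 0 for all t in a neighborhood of t₀; (ii) φ is Fréchet differentiable at (x̂(t₀), θ(t₀)); write ∂_kφ ∈ ℝ for its partial derivative in the k-th spatial coordinate and D_θφ for its partial Fréchet derivative in the F-variable, both at (x̂(t₀), θ(t₀)); (iii) ‖x̂(t₀) − x‖∞ > 0, and let J = {j : |x̂(t₀)_j − x_j| = ‖x̂(t₀) − x‖∞}; (iv) ∂_kφ = 0 for every k ∉ J; (v) ∂_jφ · (x̂(t₀)_j − x_j) < 0 for every j ∈ J; (vi) there is s ∈ ℝ such that for every j ∈ J the map t ↦ |x̂(t)_j − x_j|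 is differentiable at t₀ with derivative s. Then s = D_θφ(θ'(t₀)) / (Σ_k |∂_kφ|), i.e., the speed equals the parameter derivative divided by the ℓ¹ norm of the spatial gradient. -/
/-- Closed-form expression for the speed of the decision boundary, p = ∞ case.
`Fin n → ℝ` carries the sup norm. -/
theorem speed_of_decision_boundary_sup_norm
    {n : ℕ} (hn : 1 ≤ n)
    {F : Type*} [NormedAddCommGroup F] [NormedSpace ℝ F]
    (x : Fin n → ℝ) (xhat : ℝ → (Fin n → ℝ)) (θ : ℝ → F) (t₀ : ℝ)
    (xhat' : Fin n → ℝ) (θ' : F)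
    (hxhat : HasDerivAt xhat xhat' t₀)
    (hθ : HasDerivAt θ θ' t₀)
    (φ : (Fin n → ℝ) × F → ℝ)
    (hzero : ∀ᶠ t in nhds t₀, φ (xhat t, θ t) = 0)
    (L : (Fin n → ℝ) × F →L[ℝ] ℝ)
    (hφ : HasFDerivAt φ L (xhat t₀, θ t₀))
    (pd : Fin n → ℝ) (hpd : ∀ k, pd k = L (Pi.single k 1, 0))
    (Dθ : F →L[ℝ] ℝ) (hDθ : ∀ w : F, Dθ w = L (0, w))
    (hpos : 0 < ‖xhat t₀ - x‖)
    (J : Set (Fin n)) (hJ : J = {j | |xhat t₀ j - x j| = ‖xhat t₀ - x‖})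
    (hout : ∀ k ∉ J, pd k = 0)
    (hin : ∀ j ∈ J, pd j * (xhat t₀ j - x j) < 0)
    (s : ℝ) (hs : ∀ j ∈ J, HasDerivAt (fun t => |xhat t j - x j|) s t₀) :
    s = Dθ θ' / (∑ k, |pd k|) := by
  -- chain rule: derivative of t ↦ φ(xhat t, θ t) is L (xhat', θ'), but it's eventually 0
  have hprod : HasDerivAt (fun t => (xhat t, θ t)) (xhat', θ') t₀ := hxhat.prodMk hθ
  have hchain : HasDerivAt (fun t => φ (xhat t, θ t)) (L (xhat', θ')) t₀ :=
    hφ.comp_hasDerivAt t₀ hprod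
  have hzero' : HasDerivAt (fun _ : ℝ => (0:ℝ)) (L (xhat', θ')) t₀ :=
    hchain.congr_of_eventuallyEq (hzero.mono fun t ht => ht.symm)
  have L0 : L (xhat', θ') = 0 := hzero'.unique (hasDerivAt_const t₀ 0)
  -- component derivatives
  have hcomp : ∀ j, HasDerivAt (fun t => xhat t j - x j) (xhat' j) t₀ := by
    intro j
    have h1 := ((ContinuousLinearMap.proj (R := ℝ) (φ := fun _ : Fin n => ℝ)
      j).hasFDerivAt.comp_hasDerivAt t₀ hxhat)
    simpa using h1.sub_const (x j)
  -- key pointwise identity on J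
  have key : ∀ j ∈ J, pd j * xhat' j = -|pd j| * s := by
    intro j hj
    have hvj : |xhat t₀ j - x j| = ‖xhat t₀ - x‖ := by
      have := hJ ▸ hj; exact this
    have hne : xhat t₀ j - x j ≠ 0 := by
      intro h; rw [h] at hvj; simp at hvj; linarith
    have hcont : ContinuousAt (fun t => xhat t j - x j) t₀ := (hcomp j).continuousAt
    rcases lt_or_gt_of_ne hne with hneg | hposj
    · -- xhat t₀ j - x j < 0
      have hev : ∀ᶠ t in nhds t₀, xhat t j - x j < 0 :=
        hcont.eventually_lt continuousAt_const hneg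
      have habs : HasDerivAt (fun t => |xhat t j - x j|) (-(xhat' j)) t₀ := by
        refine ((hcomp j).neg).congr_of_eventuallyEq ?_
        filter_upwards [hev] with t ht
        rw [abs_of_neg ht]
        rfl
      have hseq : s = -(xhat' j) := (hs j hj).unique habs
      have hpdpos : 0 < pd j := by
        have := hin j hj; nlinarith
      rw [abs_of_pos hpdpos]; rw [hseq]; ring
    · -- xhat t₀ j - x j > 0
      have hev : ∀ᶠ t in nhds t₀, 0 < xhat t j - x j :=
        ContinuousAt.eventually_lt continuousAt_const hcont hposj
      have habs : HasDerivAt (fun t => |xhat t j - x j|) (xhat' j) t₀ := by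
        refine (hcomp j).congr_of_eventuallyEq ?_
        filter_upwards [hev] with t ht
        rw [abs_of_pos ht]
      have hseq : s = xhat' j := (hs j hj).unique habs
      have hpdneg : pd j < 0 := by
        have := hin j hj; nlinarith
      rw [abs_of_neg hpdneg]; rw [hseq]; ring
  -- decomposition of L
  have hdecomp : L (xhat', θ') = (∑ k, pd k * xhat' k) + Dθ θ' := by
    have h1 : (xhat', θ')
        = (∑ k, xhat' k • ((Pi.single k 1 : Fin n → ℝ), (0:F))) + ((0 : Fin n → ℝ), θ') := by
      rw [Prod.ext_iff]
      constructor
      · funext j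
        rw [Prod.fst_add, Prod.fst_sum]
        simp [Finset.sum_apply, Pi.single_apply, mul_comm]
      · rw [Prod.snd_add, Prod.snd_sum]
        simp
    rw [h1, map_add, map_sum]
    congr 1
    · refine Finset.sum_congr rfl fun k _ => ?_
      rw [map_smul, hpd k]; simp [mul_comm]
    · rw [hDθ θ']
  -- sum identity
  have hsum : (∑ k, pd k * xhat' k) = (∑ k, |pd k|) * (-s) := by
    rw [Finset.sum_mul]
    refine Finset.sum_congr rfl fun k _ => ?_
    by_cases hk : k ∈ J
    · have := key k hk; linarith [key k hk]
    · simp [hout k hk]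
  -- positivity of the sum
  have hSpos : 0 < ∑ k, |pd k| := by
    have hne : (Finset.univ : Finset (Fin n)).Nonempty := by
      haveI : NeZero n := ⟨by omega⟩
      exact Finset.univ_nonempty
    obtain ⟨j₀, -, hj₀⟩ := Finset.exists_max_image Finset.univ
      (fun j => |xhat t₀ j - x j|) hne
    have hj₀J : j₀ ∈ J := by
      rw [hJ]
      have hle : ‖xhat t₀ - x‖ ≤ |xhat t₀ j₀ - x j₀| := by
        rw [show ‖xhat t₀ - x‖ = ‖xhat t₀ - x‖ from rfl]
        refine (pi_norm_le_iff_of_nonneg (abs_nonneg _)).2 fun i => ?_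
        have := hj₀ i (Finset.mem_univ i)
        simpa [Real.norm_eq_abs] using this
      have hge : |xhat t₀ j₀ - x j₀| ≤ ‖xhat t₀ - x‖ := by
        have := norm_le_pi_norm (xhat t₀ - x) j₀
        simpa [Real.norm_eq_abs] using this
      exact le_antisymm hge hle
    have hpdne : pd j₀ ≠ 0 := by
      intro h
      have := hin j₀ hj₀J
      rw [h] at this; simp at this
    have h1 : 0 < |pd j₀| := abs_pos.2 hpdne
    refine Finset.sum_pos' (fun k _ => abs_nonneg _) ⟨j₀, Finset.mem_univ j₀, h1⟩
  -- conclude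
  rw [hdecomp, hsum] at L0
  field_simp
  nlinarith [L0, hSpos]
end

section
/- Let n ≥ 1 and equip ℝⁿ (i.e., Fin n → ℝ) with the sup norm ‖v‖∞ = max_k |v_k|. Let φ : ℝⁿ → ℝ be continuous, let a ∈ ℝⁿ satisfy φ(a) > 0, and let x̂ ∈ ℝⁿ satisfy φ(x̂) = 0 and ‖x̂ − a‖∞ ≤ ‖z − a‖∞ for every z with φ(z) = 0 (i.e., x̂ is a closest point of the zero level set of φ to a). Suppose φ is Fréchet differentiable at x̂ with gradient ∇φ(x̂) ∈ ℝⁿ, and let J = {j : |x̂_j − a_j| = ‖x̂ − a‖∞}. Then: (a) for every j ∈ J, ∇φ(x̂)_j · (x̂_j − a_j) ≤ 0 (the j-th gradient component and x̂_j − a_j have opposite signs); and (b) for every k ∉ J, ∇φ(x̂)_k = 0. -/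
/-!
With `r = ‖x̂ - a‖`, `φ` has no zero in the open ball `B(a, r)` and is positive at its centre, so by
connectedness it is positive on the ball and, by continuity, nonnegative on the closed ball. Thus `x̂`
minimises `φ` over the closed ball, a convex set (a box for the sup norm), and `L (z - x̂) ≥ 0` for
every `z` in it. Moving the `j`-th coordinate of `x̂` to `a j` gives (a); a coordinate `k ∉ J` is not
extremal and can be moved a little in both directions, which gives (b).
-/

open Metric Set

section Level

variable {E : Type*} [NormedAddCommGroup E] [NormedSpace ℝ E] {φ : E → ℝ} {a : E} {r : ℝ}

theorem pos_of_mem_ball_of_le_dist_of_eq_zero (hφ : Continuous φ) (ha : 0 < φ a)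
    (hzero : ∀ z, φ z = 0 → r ≤ dist z a) {z : E} (hz : z ∈ ball a r) : 0 < φ z := by
  by_contra! hle
  obtain ⟨w, hw, hw0⟩ := (convex_ball a r).isPreconnected.intermediate_value hz
    (mem_ball_self (pos_of_mem_ball hz)) hφ.continuousOn ⟨hle, ha.le⟩
  exact (hzero w hw0).not_gt hw

theorem nonneg_of_mem_closedBall_of_le_dist_of_eq_zero (hφ : Continuous φ) (ha : 0 < φ a)
    (hzero : ∀ z, φ z = 0 → r ≤ dist z a) (hr : r ≠ 0) {z : E} (hz : z ∈ closedBall a r) :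
    0 ≤ φ z := by
  rw [← closure_ball a hr] at hz
  refine closure_minimal (fun w hw ↦ ?_) (isClosed_le continuous_const hφ) hz
  exact (pos_of_mem_ball_of_le_dist_of_eq_zero hφ ha hzero hw).le

end Level

theorem IsMinOn.hasFDerivAt_sub_nonneg {E : Type*} [NormedAddCommGroup E] [NormedSpace ℝ E]
    {f : E → ℝ} {f' : E →L[ℝ] ℝ} {s : Set E} {x z : E} (h : IsMinOn f s x) (hs : Convex ℝ s)
    (hx : x ∈ s) (hz : z ∈ s) (hf : HasFDerivAt f f' x) : 0 ≤ f' (z - x) :=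
  h.localize.hasFDerivWithinAt_nonneg hf.hasFDerivWithinAt
    (sub_mem_posTangentConeAt_of_segment_subset (hs.segment_subset hx hz))

section Coordinates

variable {ι : Type*} [Fintype ι] [DecidableEq ι]

theorem add_single_mem_closedBall {x a : ι → ℝ} {r : ℝ} (hx : x ∈ closedBall a r) {i : ι}
    {v : ℝ} (hv : |x i + v - a i| ≤ r) : x + Pi.single i v ∈ closedBall a r := by
  rw [mem_closedBall, dist_pi_le_iff (dist_nonneg.trans hx)]
  intro j
  rcases eq_or_ne j i with rfl | hji
  · simpa [Real.dist_eq] using hv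
  · simpa [Pi.single_eq_of_ne hji] using dist_le_pi_dist x a j |>.trans hx

theorem IsMinOn.mul_nonneg_of_add_single_mem_closedBall {φ : (ι → ℝ) → ℝ}
    {L : (ι → ℝ) →L[ℝ] ℝ} {g : ι → ℝ} (hg : ∀ v, L v = ∑ k, g k * v k) {x a : ι → ℝ} {r : ℝ}
    (hmin : IsMinOn φ (closedBall a r) x) (hx : x ∈ closedBall a r) (hφ : HasFDerivAt φ L x)
    {i : ι} {v : ℝ} (hv : |x i + v - a i| ≤ r) : 0 ≤ g i * v := by
  have := hmin.hasFDerivAt_sub_nonneg (convex_closedBall a r) hx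
    (add_single_mem_closedBall hx hv) hφ
  simpa [hg, Pi.single_apply] using this

end Coordinates

theorem linf_optimality_pos_general
    {n : ℕ}
    (φ : (Fin n → ℝ) → ℝ) (hφc : Continuous φ)
    (a : Fin n → ℝ) (ha : 0 < φ a)
    (xhat : Fin n → ℝ) (hzero : φ xhat = 0)
    (hmin : ∀ z : Fin n → ℝ, φ z = 0 → ‖xhat - a‖ ≤ ‖z - a‖)
    (L : (Fin n → ℝ) →L[ℝ] ℝ) (hφd : HasFDerivAt φ L xhat)
    (g : Fin n → ℝ) (hg : ∀ v : Fin n → ℝ, L v = ∑ k, g k * v k)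
    (J : Set (Fin n)) (hJ : J = {j | |xhat j - a j| = ‖xhat - a‖}) :
    (∀ j ∈ J, g j * (xhat j - a j) ≤ 0) ∧ (∀ k ∉ J, g k = 0) := by
  set r := ‖xhat - a‖
  have hxhat : xhat ∈ closedBall a r := mem_closedBall_iff_norm.mpr le_rfl
  have hr : r ≠ 0 := fun h ↦ by
    rw [norm_eq_zero, sub_eq_zero] at h
    exact ha.ne' (h ▸ hzero)
  have hminOn : IsMinOn φ (closedBall a r) xhat := isMinOn_iff.mpr fun z hz ↦
    hzero ▸ nonneg_of_mem_closedBall_of_le_dist_of_eq_zero hφc ha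
      (fun z hz ↦ by simpa [dist_eq_norm] using hmin z hz) hr hz
  have hcoord {i : Fin n} {v : ℝ} (hv : |xhat i + v - a i| ≤ r) : 0 ≤ g i * v :=
    hminOn.mul_nonneg_of_add_single_mem_closedBall hg hxhat hφd hv
  subst hJ
  refine ⟨fun j _ ↦ ?_, fun k hk ↦ ?_⟩
  · have := @hcoord j (a j - xhat j) (by simp [r])
    linarith
  · set δ := r - |xhat k - a k|
    have hδ : 0 < δ := sub_pos.mpr ((norm_le_pi_norm (xhat - a) k).lt_of_ne hk)
    have hsmall {v : ℝ} (hv : |v| ≤ δ) : |xhat k + v - a k| ≤ r :=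
      calc |xhat k + v - a k| = |(xhat k - a k) + v| := by ring_nf
        _ ≤ |xhat k - a k| + |v| := abs_add_le _ _
        _ ≤ r := by linarith
    have h₁ := hcoord (hsmall (abs_of_pos hδ).le)
    have h₂ := hcoord (hsmall ((abs_neg δ).trans (abs_of_pos hδ)).le)
    exact (mul_eq_zero.mp (by linarith)).resolve_right hδ.ne'

/-- Lemma A.2 (ℓ∞ optimality conditions, case φ(a) > 0). `Fin n → ℝ` carries the sup norm. -/
theorem linf_optimality_pos
    {n : ℕ} (hn : 1 ≤ n)
    (φ : (Fin n → ℝ) → ℝ) (hφc : Continuous φ)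
    (a : Fin n → ℝ) (ha : 0 < φ a)
    (xhat : Fin n → ℝ) (hzero : φ xhat = 0)
    (hmin : ∀ z : Fin n → ℝ, φ z = 0 → ‖xhat - a‖ ≤ ‖z - a‖)
    (L : (Fin n → ℝ) →L[ℝ] ℝ) (hφd : HasFDerivAt φ L xhat)
    (g : Fin n → ℝ) (hg : ∀ v : Fin n → ℝ, L v = ∑ k, g k * v k)
    (J : Set (Fin n)) (hJ : J = {j | |xhat j - a j| = ‖xhat - a‖}) :
    (∀ j ∈ J, g j * (xhat j - a j) ≤ 0) ∧ (∀ k ∉ J, g k = 0) :=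
  linf_optimality_pos_general φ hφc a ha xhat hzero hmin L hφd g hg J hJ
end

section
/- Let n ≥ 1 and equip ℝⁿ (i.e., Fin n → ℝ) with the sup norm ‖v‖∞ = max_k |v_k|. Let φ : ℝⁿ → ℝ be continuous, let a ∈ ℝⁿ satisfy φ(a) < 0, and let x̂ ∈ ℝⁿ satisfy φ(x̂) = 0 and ‖x̂ − a‖∞ ≤ ‖z − a‖∞ for every z with φ(z) = 0 (i.e., x̂ is a closest point of the zero level set of φ to a). Suppose φ is Fréchet differentiable at x̂ with gradient ∇φ(x̂) ∈ ℝⁿ, and let J = {j : |x̂_j − a_j| = ‖x̂ − a‖∞}. Then: (a) for every j ∈ J, ∇φ(x̂)_j · (x̂_j − a_j) ≥ 0 (the j-th gradient component and x̂_j − a_j have the same sign); and (b) for every k ∉ J, ∇φ(x̂)_k = 0. -/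
open Filter Topology

private lemma aux_le_zero {x W : ℝ} (h : ∀ ε : ℝ, 0 < ε → x ≤ ε * W) : x ≤ 0 := by
  by_contra hx
  push_neg at hx
  have hε : (0:ℝ) < x / (2 * (|W| + 1)) := by positivity
  have h1 := h _ hε
  have hW : W ≤ |W| := le_abs_self W
  have habs : (0:ℝ) ≤ |W| := abs_nonneg W
  set ε := x / (2 * (|W| + 1)) with hεdef
  have h2 : ε * W ≤ ε * |W| := mul_le_mul_of_nonneg_left hW hε.le
  have h3 : ε * |W| ≤ ε * (|W| + 1) := by nlinarith
  have h4 : ε * (|W| + 1) = x / 2 := by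
    rw [hεdef]; field_simp
  linarith

/-- Remark after Lemma A.2 (ℓ∞ optimality conditions, case φ(a) < 0).
`Fin n → ℝ` carries the sup norm. -/
theorem linf_optimality_neg
    {n : ℕ} (hn : 1 ≤ n)
    (φ : (Fin n → ℝ) → ℝ) (hφc : Continuous φ)
    (a : Fin n → ℝ) (ha : φ a < 0)
    (xhat : Fin n → ℝ) (hzero : φ xhat = 0)
    (hmin : ∀ z : Fin n → ℝ, φ z = 0 → ‖xhat - a‖ ≤ ‖z - a‖)
    (L : (Fin n → ℝ) →L[ℝ] ℝ) (hφd : HasFDerivAt φ L xhat)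
    (g : Fin n → ℝ) (hg : ∀ v : Fin n → ℝ, L v = ∑ k, g k * v k)
    (J : Set (Fin n)) (hJ : J = {j | |xhat j - a j| = ‖xhat - a‖}) :
    (∀ j ∈ J, 0 ≤ g j * (xhat j - a j)) ∧ (∀ k ∉ J, g k = 0) := by
  subst hJ
  set d : Fin n → ℝ := xhat - a with hd
  set r : ℝ := ‖xhat - a‖ with hr
  have hdap : ∀ i, d i = xhat i - a i := fun i => rfl
  have hr0 : 0 < r := by
    rw [hr, norm_pos_iff]
    intro h
    have hxa : xhat = a := by rwa [sub_eq_zero] at h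
    rw [hxa] at hzero; linarith
  -- φ is negative on the open ball B(a, r)
  have hball : ∀ y : Fin n → ℝ, ‖y - a‖ < r → φ y < 0 := by
    intro y hy
    by_contra hge
    push_neg at hge
    have hcont : ContinuousOn (fun t : ℝ => φ (a + t • (y - a))) (Set.Icc 0 1) := by
      apply Continuous.continuousOn
      exact hφc.comp (continuous_const.add (continuous_id.smul continuous_const))
    have hivt := intermediate_value_Icc (by norm_num : (0:ℝ) ≤ 1) hcont
    have hmem : (0:ℝ) ∈ Set.Icc ((fun t : ℝ => φ (a + t • (y - a))) 0)
        ((fun t : ℝ => φ (a + t • (y - a))) 1) := by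
      constructor
      · simpa using ha.le
      · simpa using hge
    obtain ⟨t, ht, hφt⟩ := hivt hmem
    have hzle := hmin _ hφt
    have hnle : ‖a + t • (y - a) - a‖ ≤ ‖y - a‖ := by
      have : a + t • (y - a) - a = t • (y - a) := by abel
      rw [this, norm_smul, Real.norm_eq_abs, abs_of_nonneg ht.1]
      calc t * ‖y - a‖ ≤ 1 * ‖y - a‖ := by
            apply mul_le_mul_of_nonneg_right ht.2 (norm_nonneg _)
        _ = ‖y - a‖ := one_mul _
    linarith
  -- First-order condition: descent directions have nonpositive derivative
  have hdir : ∀ v : Fin n → ℝ,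
      (∀ᶠ t in 𝓝[>] (0:ℝ), ‖xhat + t • v - a‖ < r) → L v ≤ 0 := by
    intro v hv
    have hcurve : HasDerivAt (fun t : ℝ => xhat + t • v) v 0 := by
      simpa using ((hasDerivAt_id (0:ℝ)).smul_const v).const_add xhat
    have hψ : HasDerivAt (fun t : ℝ => φ (xhat + t • v)) (L v) 0 := by
      have h0 : HasFDerivAt φ L ((fun t : ℝ => xhat + t • v) 0) := by
        simpa using hφd
      exact h0.comp_hasDerivAt 0 hcurve
    have hslope := hasDerivAt_iff_tendsto_slope.mp hψ
    have hmono : 𝓝[>] (0:ℝ) ≤ 𝓝[≠] (0:ℝ) :=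
      nhdsWithin_mono _ (fun t ht => ne_of_gt ht)
    refine le_of_tendsto (hslope.mono_left hmono) ?_
    filter_upwards [hv, self_mem_nhdsWithin] with t htv ht
    have hφneg : φ (xhat + t • v) < 0 := hball _ htv
    have hs : slope (fun t : ℝ => φ (xhat + t • v)) 0 t
        = φ (xhat + t • v) / t := by
      rw [slope_def_field]
      simp [hzero]
    rw [hs]
    exact div_nonpos_of_nonpos_of_nonneg hφneg.le (le_of_lt ht)
  have hdle : ∀ i, |d i| ≤ r := by
    intro i
    have := norm_le_pi_norm (xhat - a) i
    rw [Real.norm_eq_abs] at this; exact this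
  -- sign function
  set s : Fin n → ℝ := fun i => if 0 < d i then 1 else -1 with hsdef
  have habs_s : ∀ i, |s i| = 1 := by
    intro i
    by_cases h : 0 < d i <;> simp [hsdef, h]
  have hs1 : ∀ i, s i = 1 ∨ s i = -1 := by
    intro i
    by_cases h : 0 < d i
    · left; simp [hsdef, h]
    · right; simp [hsdef, h]
  have hsmul : ∀ i, s i * |d i| = d i := by
    intro i
    rcases lt_trichotomy (d i) 0 with h | h | h
    · simp [hsdef, not_lt.mpr h.le, abs_of_neg h]
    · simp [hsdef, h]
    · simp [hsdef, h, abs_of_pos h]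
  -- coordinatewise eventual bounds
  have hA : ∀ (i : Fin n), |d i| < r → ∀ c : ℝ,
      ∀ᶠ t in 𝓝[>] (0:ℝ), |d i + t * c| < r := by
    intro i hi c
    have hcnt : Continuous fun t : ℝ => |d i + t * c| :=
      (continuous_const.add (continuous_id.mul continuous_const)).abs
    have htend : Tendsto (fun t : ℝ => |d i + t * c|) (𝓝 0) (𝓝 |d i|) := by
      simpa using hcnt.tendsto 0
    exact (htend.eventually_lt_const hi).filter_mono nhdsWithin_le_nhds
  have hB : ∀ (i : Fin n), |d i| = r → ∀ c : ℝ, c < 0 →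
      ∀ᶠ t in 𝓝[>] (0:ℝ), |d i + t * (c * s i)| < r := by
    intro i hi c hc
    have hdi : d i = s i * r := by rw [← hi]; exact (hsmul i).symm
    have hIoo : Set.Ioo (0:ℝ) (r / (-c)) ∈ 𝓝[>] (0:ℝ) :=
      Ioo_mem_nhdsGT_of_mem ⟨le_refl 0, div_pos hr0 (neg_pos.mpr hc)⟩
    filter_upwards [hIoo] with t ht
    have h1 : d i + t * (c * s i) = s i * (r + t * c) := by rw [hdi]; ring
    rw [h1, abs_mul, habs_s i, one_mul]
    have htc : t * (-c) < r := (lt_div_iff₀ (neg_pos.mpr hc)).mp ht.2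
    rw [abs_of_nonneg (by nlinarith [ht.1] : (0:ℝ) ≤ r + t * c)]
    nlinarith [ht.1]
  -- the shrink direction w
  set w : Fin n → ℝ := fun i => if |d i| = r then s i else 0 with hwdef
  -- main eventual norm bound
  have hev : ∀ v : Fin n → ℝ,
      (∀ i, |d i| = r → ∃ c, c < 0 ∧ v i = c * s i) →
      ∀ᶠ t in 𝓝[>] (0:ℝ), ‖xhat + t • v - a‖ < r := by
    intro v hvp
    have hco : ∀ i, ∀ᶠ t in 𝓝[>] (0:ℝ), |d i + t * v i| < r := by
      intro i
      rcases lt_or_eq_of_le (hdle i) with h | h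
      · exact hA i h (v i)
      · obtain ⟨c, hc, hvi⟩ := hvp i h
        rw [hvi]
        exact hB i h c hc
    have hall := Filter.eventually_all.mpr hco
    filter_upwards [hall] with t ht
    rw [pi_norm_lt_iff hr0]
    intro i
    have hcoord : (xhat + t • v - a) i = d i + t * v i := by
      simp [hd, Pi.sub_apply, Pi.add_apply, Pi.smul_apply, smul_eq_mul]
      ring
    rw [hcoord, Real.norm_eq_abs]
    exact ht i
  -- value of L on such directions
  have hWdef : L w = ∑ i, g i * w i := hg w
  -- key inequality: for j and σ, combined direction
  have hkey : ∀ (j : Fin n) (σ ε : ℝ), 0 < ε →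
      (∀ i, |d i| = r → (if i = j then σ else 0) + (-ε) * w i = ((if i = j then σ * s i else 0) + -ε) * s i ∧ ((if i = j then σ * s i else 0) + -ε) < 0) →
      σ * g j - ε * L w ≤ 0 := by
    intro j σ ε hε hcond
    set v : Fin n → ℝ := fun i => (if i = j then σ else 0) + (-ε) * w i with hvdef
    have hLv : L v = σ * g j - ε * L w := by
      rw [hg v, hWdef]
      simp only [hvdef]
      rw [Finset.sum_congr rfl (fun i _ => by by_cases h : i = j <;> simp [h] <;> ring :
        ∀ i ∈ Finset.univ, g i * ((if i = j then σ else 0) + (-ε) * w i)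
          = (if i = j then σ * g i else 0) + (-ε) * (g i * w i))]
      rw [Finset.sum_add_distrib, Finset.sum_ite_eq' Finset.univ j
        (fun i => σ * g i), ← Finset.mul_sum]
      simp
      ring
    have hLv0 : L v ≤ 0 := by
      apply hdir
      apply hev
      intro i hi
      obtain ⟨heq, hlt⟩ := hcond i hi
      refine ⟨(if i = j then σ * s i else 0) + -ε, hlt, ?_⟩
      simpa [hvdef] using heq
    linarith [hLv ▸ hLv0]
  -- conclusion
  constructor
  · -- active coordinates
    intro j hj
    have hjr : |d j| = r := by
      simpa [hdap, Set.mem_setOf_eq] using hj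
    have hsgn : 0 ≤ g j * s j := by
      have h1 : ∀ ε : ℝ, 0 < ε → -(s j) * g j - ε * L w ≤ 0 := by
        intro ε hε
        apply hkey j (-(s j)) ε hε
        intro i hi
        by_cases hij : i = j
        · subst hij
          constructor
          · simp only [hwdef, hi, if_pos rfl, if_true]
            rcases hs1 i with h | h <;> rw [h] <;> ring
          · rcases hs1 i with h | h <;> simp [h] <;> linarith
        · constructor
          · simp [hwdef, hi, hij]
          · simp [hij]; linarith
      have h2 : ∀ ε : ℝ, 0 < ε → -(g j * s j) ≤ ε * L w := by
        intro ε hε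
        have := h1 ε hε
        linarith [this]
      have := aux_le_zero h2
      linarith
    have hdj : xhat j - a j = s j * |d j| := by rw [hsmul j, hdap]
    rw [hdj]
    calc (0:ℝ) = (g j * s j) * 0 := by ring
      _ ≤ (g j * s j) * |d j| := by
          apply mul_le_mul_of_nonneg_left (abs_nonneg _) hsgn
      _ = g j * (s j * |d j|) := by ring
  · -- inactive coordinates
    intro k hk
    have hkr : |d k| ≠ r := by
      simpa [hdap, Set.mem_setOf_eq] using hk
    have hbound : ∀ σ : ℝ, |σ| = 1 → σ * g k ≤ 0 := by
      intro σ hσ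
      have h1 : ∀ ε : ℝ, 0 < ε → σ * g k - ε * L w ≤ 0 := by
        intro ε hε
        apply hkey k σ ε hε
        intro i hi
        have hik : i ≠ k := fun h => hkr (h ▸ hi)
        constructor
        · simp [hwdef, hi, hik]
        · simp [hik]; linarith
      have h2 : ∀ ε : ℝ, 0 < ε → σ * g k ≤ ε * L w := by
        intro ε hε
        linarith [h1 ε hε]
      exact aux_le_zero h2
    have hp := hbound 1 (by norm_num)
    have hm := hbound (-1) (by norm_num)
    linarith
end

section
/- Let E and F be real inner product spaces, let x ∈ E, and let x̂ : ℝ → E and θ : ℝ → F be curves differentiable at t₀ with derivatives x̂'(t₀) and θ'(t₀). Assume: (i) φ : E × F → ℝ satisfies φ(x̂(t), θ(t)) = 0 for all t in a neighborhood of t₀; (ii) φ is Fréchet differentiable at (x̂(t₀), θ(t₀)) with derivative L, and there are vectors g_x ∈ E and g_θ ∈ F such that L(v, w) = ⟪g_x, v⟫ + ⟪g_θ, w⟫ for all (v, w); (iii) x̂(t₀) ≠ x; (iv) there is a real c > 0 with g_x = c • (x − x̂(t₀)). Let R = ‖x̂(t₀) − x‖ and let h : ℝ → ℝ be differentiable at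 R with derivative h'(R). Then the map t ↦ h(‖x̂(t) − x‖) is differentiable at t₀ with derivative equal to h'(R) · ⟪g_θ, θ'(t₀)⟫ / ‖g_x‖. -/
open RealInnerProductSpace

/-- Gradient of any smooth function of the margin, p = 2 case (Theorem 3.1 along a curve). -/
theorem deriv_of_smooth_function_of_margin_inner
    {E F : Type*} [NormedAddCommGroup E] [InnerProductSpace ℝ E]
    [NormedAddCommGroup F] [InnerProductSpace ℝ F]
    (x : E) (xhat : ℝ → E) (θ : ℝ → F) (t₀ : ℝ)
    (xhat' : E) (θ' : F)
    (hxhat : HasDerivAt xhat xhat' t₀)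
    (hθ : HasDerivAt θ θ' t₀)
    (φ : E × F → ℝ)
    (hzero : ∀ᶠ t in nhds t₀, φ (xhat t, θ t) = 0)
    (L : E × F →L[ℝ] ℝ)
    (hφ : HasFDerivAt φ L (xhat t₀, θ t₀))
    (gx : E) (gθ : F)
    (hL : ∀ (v : E) (w : F), L (v, w) = ⟪gx, v⟫ + ⟪gθ, w⟫)
    (hne : xhat t₀ ≠ x)
    (c : ℝ) (hc : 0 < c) (hgx : gx = c • (x - xhat t₀))
    (R : ℝ) (hR : R = ‖xhat t₀ - x‖)
    (h : ℝ → ℝ) (h' : ℝ) (hh : HasDerivAt h h' R) :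
    HasDerivAt (fun t => h ‖xhat t - x‖) (h' * (⟪gθ, θ'⟫ / ‖gx‖)) t₀ := by
  set u : ℝ → E := fun t => xhat t - x with hu_def
  have hu : HasDerivAt u xhat' t₀ := hxhat.sub_const x
  have hu0 : u t₀ ≠ 0 := sub_ne_zero.2 hne
  have hnorm0 : ‖u t₀‖ ≠ 0 := norm_ne_zero_iff.2 hu0
  -- derivative of the constraint is zero
  have hcomp : HasDerivAt (fun t => φ (xhat t, θ t)) (L (xhat', θ')) t₀ :=
    hφ.comp_hasDerivAt t₀ (hxhat.prodMk hθ)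
  have hzero' : HasDerivAt (fun t => φ (xhat t, θ t)) 0 t₀ :=
    (hasDerivAt_const t₀ (0 : ℝ)).congr_of_eventuallyEq
      (hzero.mono fun t ht => ht)
  have hL0 : ⟪gx, xhat'⟫ + ⟪gθ, θ'⟫ = 0 := by
    rw [← hL]
    exact hcomp.unique hzero'
  -- key inner product relation
  have hinner : ⟪u t₀, xhat'⟫ = ⟪gθ, θ'⟫ / c := by
    have : ⟪gx, xhat'⟫ = -(c * ⟪u t₀, xhat'⟫) := by
      rw [hgx, real_inner_smul_left, hu_def, ← neg_sub (xhat t₀) x, inner_neg_left]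
      ring
    field_simp
    linarith [hL0, this]
  have hgxnorm : ‖gx‖ = c * ‖u t₀‖ := by
    rw [hgx, norm_smul, Real.norm_eq_abs, abs_of_pos hc, hu_def]
    simp [norm_sub_rev]
  -- derivative of norm squared
  have hsq : HasDerivAt (fun t => ‖u t‖ ^ 2) (2 * ⟪u t₀, xhat'⟫) t₀ := hu.norm_sq
  have hsqrt : HasDerivAt (fun t => ‖u t‖) (⟪u t₀, xhat'⟫ / ‖u t₀‖) t₀ := by
    have hne2 : ‖u t₀‖ ^ 2 ≠ 0 := pow_ne_zero 2 hnorm0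
    have := (Real.hasDerivAt_sqrt hne2).comp t₀ hsq
    have heq : (fun t => Real.sqrt (‖u t‖ ^ 2)) = fun t => ‖u t‖ := by
      funext t; rw [Real.sqrt_sq (norm_nonneg _)]
    rw [Function.comp_def, heq] at this
    refine this.congr_deriv ?_
    rw [Real.sqrt_sq (norm_nonneg _)]
    field_simp
  have hRu : R = ‖u t₀‖ := hR
  have hfinal := (hRu ▸ hh).comp t₀ hsqrt
  rw [Function.comp_def] at hfinal
  refine hfinal.congr_deriv ?_
  rw [hinner, hgxnorm]
  field_simp
end

section
/- Let E and F be real normed vector spaces, let x ∈ E, and let x̂ : ℝ → E and θ : ℝ → F be curves differentiable at t₀ with derivatives x̂'(t₀) and θ'(t₀). Assume: (i) φ : E × F → ℝ satisfies φ(x̂(t), θ(t)) = 0 for all t in a neighborhood of t₀; (ii) φ is Fréchet differentiable at (x̂(t₀), θ(t₀)) with derivative L, and write D_x for the continuous linear map v ↦ L(v, 0) and D_θ for w ↦ L(0, w); (iii) x̂(t₀) ≠ x and the map z ↦ ‖z − x‖ is Fréchet differentiable at x̂(t₀) with derivative D_N; (iv) there is a real λ > 0 with D_x = −λ • D_N.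 Let R = ‖x̂(t₀) − x‖ and let h : ℝ → ℝ be differentiable at R with derivative h'(R). Then the map t ↦ h(‖x̂(t) − x‖) is differentiable at t₀ with derivative equal to h'(R) · D_θ(θ'(t₀)) / ‖D_x‖, where ‖D_x‖ denotes the operator norm of D_x. -/
/-- Gradient of any smooth function of the margin, general normed-space form
(Theorem 3.1 along a curve). -/
theorem deriv_of_smooth_function_of_margin
    {E F : Type*} [NormedAddCommGroup E] [NormedSpace ℝ E]
    [NormedAddCommGroup F] [NormedSpace ℝ F]
    (x : E) (xhat : ℝ → E) (θ : ℝ → F) (t₀ : ℝ)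
    (xhat' : E) (θ' : F)
    (hxhat : HasDerivAt xhat xhat' t₀)
    (hθ : HasDerivAt θ θ' t₀)
    (φ : E × F → ℝ)
    (hzero : ∀ᶠ t in nhds t₀, φ (xhat t, θ t) = 0)
    (L : E × F →L[ℝ] ℝ)
    (hφ : HasFDerivAt φ L (xhat t₀, θ t₀))
    (Dx : E →L[ℝ] ℝ) (Dθ : F →L[ℝ] ℝ)
    (hDx : ∀ v : E, Dx v = L (v, 0))
    (hDθ : ∀ w : F, Dθ w = L (0, w))
    (hne : xhat t₀ ≠ x)
    (DN : E →L[ℝ] ℝ)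
    (hDN : HasFDerivAt (fun z : E => ‖z - x‖) DN (xhat t₀))
    (lam : ℝ) (hlam : 0 < lam)
    (hKKT : Dx = (-lam) • DN)
    (R : ℝ) (hR : R = ‖xhat t₀ - x‖)
    (h : ℝ → ℝ) (h' : ℝ) (hh : HasDerivAt h h' R) :
    HasDerivAt (fun t => h ‖xhat t - x‖) (h' * (Dθ θ' / ‖Dx‖)) t₀ := by
  subst hR
  -- derivative of the implicit constraint is zero
  have hcurve : HasDerivAt (fun t => (xhat t, θ t)) (xhat', θ') t₀ := hxhat.prodMk hθ
  have hcomp : HasDerivAt (fun t => φ (xhat t, θ t)) (L (xhat', θ')) t₀ :=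
    hφ.comp_hasDerivAt t₀ hcurve
  have hzero' : HasDerivAt (fun t => φ (xhat t, θ t)) 0 t₀ :=
    (hasDerivAt_const t₀ (0:ℝ)).congr_of_eventuallyEq hzero
  have hL0 : Dx xhat' + Dθ θ' = 0 := by
    have := hcomp.unique hzero'
    have hsplit : (xhat', θ') = ((xhat', 0) : E × F) + (0, θ') := by simp
    rw [hDx, hDθ, ← map_add, ← hsplit, this]
  -- DN (xhat t₀ - x) = ‖xhat t₀ - x‖
  have hline : HasDerivAt (fun s : ℝ => xhat t₀ + s • (xhat t₀ - x)) (xhat t₀ - x) 0 := by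
    simpa using ((hasDerivAt_id (0:ℝ)).smul_const (xhat t₀ - x)).const_add (xhat t₀)
  have hDN0 : HasFDerivAt (fun z : E => ‖z - x‖) DN (xhat t₀ + (0:ℝ) • (xhat t₀ - x)) := by
    simpa using hDN
  have hcomp2 : HasDerivAt (fun s : ℝ => ‖(xhat t₀ + s • (xhat t₀ - x)) - x‖)
      (DN (xhat t₀ - x)) 0 := hDN0.comp_hasDerivAt (l := fun z : E => ‖z - x‖) (f := fun s : ℝ => xhat t₀ + s • (xhat t₀ - x)) (0:ℝ) hline
  have haff : HasDerivAt (fun s : ℝ => (1 + s) * ‖xhat t₀ - x‖) ‖xhat t₀ - x‖ 0 := by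
    simpa using (((hasDerivAt_id (0:ℝ)).const_add 1).mul_const ‖xhat t₀ - x‖)
  have heq : (fun s : ℝ => ‖(xhat t₀ + s • (xhat t₀ - x)) - x‖)
      =ᶠ[nhds (0:ℝ)] (fun s : ℝ => (1 + s) * ‖xhat t₀ - x‖) := by
    filter_upwards [eventually_gt_nhds (show (-1:ℝ) < 0 by norm_num)] with s hs
    have : (xhat t₀ + s • (xhat t₀ - x)) - x = (1 + s) • (xhat t₀ - x) := by
      rw [add_smul, one_smul]; abel
    rw [this, norm_smul, Real.norm_eq_abs, abs_of_pos (by linarith)]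
  have hDNval : DN (xhat t₀ - x) = ‖xhat t₀ - x‖ :=
    hcomp2.unique (haff.congr_of_eventuallyEq heq)
  have hpos : (0:ℝ) < ‖xhat t₀ - x‖ := by
    simpa [sub_eq_zero] using (norm_pos_iff.mpr (sub_ne_zero.mpr hne))
  -- ‖DN‖ = 1
  have hlip : LipschitzWith 1 (fun z : E => ‖z - x‖) := by
    apply LipschitzWith.of_dist_le_mul
    intro a b
    rw [Real.dist_eq, NNReal.coe_one, one_mul, dist_eq_norm]
    calc |‖a - x‖ - ‖b - x‖| ≤ ‖(a - x) - (b - x)‖ := abs_norm_sub_norm_le _ _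
      _ = ‖a - b‖ := by congr 1; abel
  have hle : ‖DN‖ ≤ 1 := by simpa using hDN.le_of_lipschitz hlip
  have hge : 1 ≤ ‖DN‖ := by
    have h1 : ‖xhat t₀ - x‖ ≤ ‖DN‖ * ‖xhat t₀ - x‖ := by
      calc ‖xhat t₀ - x‖ = DN (xhat t₀ - x) := hDNval.symm
        _ ≤ ‖DN (xhat t₀ - x)‖ := le_abs_self _
        _ ≤ ‖DN‖ * ‖xhat t₀ - x‖ := DN.le_opNorm _
    nlinarith
  have hDNnorm : ‖DN‖ = 1 := le_antisymm hle hge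
  have hDxnorm : ‖Dx‖ = lam := by
    simp [hKKT, norm_smul, hDNnorm, abs_of_pos hlam]
  -- derivative of margin
  have hnorm : HasDerivAt (fun t => ‖xhat t - x‖) (DN xhat') t₀ :=
    hDN.comp_hasDerivAt t₀ hxhat
  have hfinal := hh.comp t₀ hnorm
  have hDxval : Dx xhat' = -lam * DN xhat' := by rw [hKKT]; simp
  have : DN xhat' = Dθ θ' / ‖Dx‖ := by
    rw [hDxnorm]
    have : -lam * DN xhat' + Dθ θ' = 0 := by rw [← hDxval]; exact hL0
    field_simp
    linarith
  rw [this] at hfinal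
  exact hfinal
end

section
/- Let E be a real normed vector space, K ≥ 2, and let z : E → (Fin K → ℝ) be a continuous map (the logits of a classifier). Fix y ∈ Fin K and β > 0, and define for w ∈ E the logit margin φ(w) = z(w)_y − max_{y' ≠ y} z(w)_{y'} and the soft logit margin Φ(w) = z(w)_y − (1/β) · log(Σ_{y' ≠ y} exp(β · z(w)_{y'})). Suppose x ∈ E satisfies Φ(x) > 0 and x̂ ∈ E satisfies φ(x̂) = 0. Then the metric infimum distance from x to the soft decision boundary {w : Φ(w) = 0} is at most ‖x̂ − x‖. Consequently, if the exact decision boundary {w : φ(w) = 0} is nonempty, then the infimum distance from x to {w : Φ(w) = 0} is at most the infimum distance from x to {w : φ(w) = 0} (i.e., R^soft(x) ≤ R(x)). -/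
/-!
The log-sum-exp term dominates the maximum, so `Φ ≤ φ` pointwise. Hence `Φ` is positive at `x`
and nonpositive at any point `x̂` of the exact boundary, and by the intermediate value theorem the
continuous `Φ` vanishes somewhere on the segment `[x, x̂]`, at distance at most `‖x̂ - x‖` from `x`.
-/

open Metric Finset

lemma Finset.sup'_le_one_div_mul_log_sum_exp {ι : Type*} {s : Finset ι} (hs : s.Nonempty)
    (f : ι → ℝ) {β : ℝ} (hβ : 0 < β) :
    s.sup' hs f ≤ 1 / β * Real.log (∑ i ∈ s, Real.exp (β * f i)) := by
  obtain ⟨i, hi, hmax⟩ := s.exists_mem_eq_sup' hs f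
  have hexp : Real.exp (β * f i) ≤ ∑ j ∈ s, Real.exp (β * f j) :=
    single_le_sum (f := fun j => Real.exp (β * f j)) (fun j _ => (Real.exp_pos _).le) hi
  have hlog : β * f i ≤ Real.log (∑ j ∈ s, Real.exp (β * f j)) :=
    (Real.le_log_iff_exp_le (sum_pos (fun j _ => Real.exp_pos _) hs)).2 hexp
  rw [hmax, one_div_mul_eq_div, le_div_iff₀ hβ, mul_comm]
  exact hlog

lemma Metric.infDist_setOf_eq_zero_le_dist {E : Type*} [NormedAddCommGroup E] [NormedSpace ℝ E]
    {f : E → ℝ} {x x' : E} (hf : ContinuousOn f (segment ℝ x x')) (hx : 0 ≤ f x) (hx' : f x' ≤ 0) :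
    infDist x {w | f w = 0} ≤ dist x x' := by
  obtain ⟨w, hw, hfw⟩ : ∃ w ∈ segment ℝ x x', f w = 0 :=
    (convex_segment x x').isPreconnected.intermediate_value (right_mem_segment ℝ x x')
      (left_mem_segment ℝ x x') hf ⟨hx', hx⟩
  calc infDist x {w | f w = 0} ≤ dist x w := infDist_le_dist_of_mem hfw
    _ ≤ dist x x' := by
      rw [← dist_add_dist_of_mem_segment hw]
      exact le_add_of_nonneg_right dist_nonneg

theorem soft_margin_le_margin_general
    {E : Type*} [NormedAddCommGroup E] [NormedSpace ℝ E]
    {K : ℕ}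
    (z : E → Fin K → ℝ) (hz : Continuous z)
    (y : Fin K) (β : ℝ) (hβ : 0 < β)
    (hne : (Finset.univ.erase y).Nonempty)
    (φ Φ : E → ℝ)
    (hφ : ∀ w : E, φ w = z w y - (Finset.univ.erase y).sup' hne (z w))
    (hΦ : ∀ w : E,
      Φ w = z w y - (1 / β) * Real.log (∑ y' ∈ Finset.univ.erase y, Real.exp (β * z w y')))
    (x : E) (hx : 0 < Φ x) :
    (∀ xhat : E, φ xhat = 0 → Metric.infDist x {w : E | Φ w = 0} ≤ ‖xhat - x‖) ∧
      ({w : E | φ w = 0}.Nonempty →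
        Metric.infDist x {w : E | Φ w = 0} ≤ Metric.infDist x {w : E | φ w = 0}) := by
  have hΦ_le_φ (w : E) : Φ w ≤ φ w := by
    rw [hΦ, hφ]
    linarith [Finset.sup'_le_one_div_mul_log_sum_exp hne (z w) hβ]
  have hΦ_cont : Continuous Φ := by
    rw [funext hΦ]
    exact .sub (by fun_prop) <| .mul continuous_const <| .log (by fun_prop) fun w =>
      (sum_pos (fun i _ => Real.exp_pos _) hne).ne'
  have hsoft (xhat : E) (hxhat : φ xhat = 0) : infDist x {w | Φ w = 0} ≤ ‖xhat - x‖ := by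
    rw [← dist_eq_norm']
    exact infDist_setOf_eq_zero_le_dist hΦ_cont.continuousOn hx.le (hxhat ▸ hΦ_le_φ xhat)
  refine ⟨hsoft, fun hexact => (le_infDist hexact).2 fun xhat hxhat => ?_⟩
  rw [dist_eq_norm']
  exact hsoft xhat hxhat

/-- Proposition on the soft decision boundary, part 2: the soft decision boundary is
always closer to x than the exact decision boundary, i.e. R^soft(x) ≤ R(x). -/
theorem soft_margin_le_margin
    {E : Type*} [NormedAddCommGroup E] [NormedSpace ℝ E]
    {K : ℕ} (hK : 2 ≤ K)
    (z : E → Fin K → ℝ) (hz : Continuous z)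
    (y : Fin K) (β : ℝ) (hβ : 0 < β)
    (hne : (Finset.univ.erase y).Nonempty)
    (φ Φ : E → ℝ)
    (hφ : ∀ w : E, φ w = z w y - (Finset.univ.erase y).sup' hne (z w))
    (hΦ : ∀ w : E,
      Φ w = z w y - (1 / β) * Real.log (∑ y' ∈ Finset.univ.erase y, Real.exp (β * z w y')))
    (x : E) (hx : 0 < Φ x) :
    (∀ xhat : E, φ xhat = 0 → Metric.infDist x {w : E | Φ w = 0} ≤ ‖xhat - x‖) ∧
      ({w : E | φ w = 0}.Nonempty →
        Metric.infDist x {w : E | Φ w = 0} ≤ Metric.infDist x {w : E | φ w = 0}) :=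
  soft_margin_le_margin_general z hz y β hβ hne φ Φ hφ hΦ x hx
end

section
/- Let E be a real normed vector space, let φ : E → ℝ be continuous, and let x ∈ E with φ(x) > 0. Suppose x̂ ∈ E satisfies φ(x̂) = 0 and ‖x̂ − x‖ ≤ ‖z − x‖ for every z with φ(z) = 0 (i.e., x̂ is a closest point of the zero level set of φ to x). If φ is Fréchet differentiable at x̂ with derivative L, then L(x − x̂) ≥ 0. -/
/-- Positivity of the Lagrange multiplier: if φ(x) > 0 and x̂ is a closest point of the
zero level set {φ = 0} to x, then the directional derivative of φ at x̂ in the direction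
from x̂ toward x is nonnegative. -/
theorem directional_deriv_nonneg_at_closest_boundary_point
    {E : Type*} [NormedAddCommGroup E] [NormedSpace ℝ E]
    (φ : E → ℝ) (hφc : Continuous φ)
    (x : E) (hx : 0 < φ x)
    (xhat : E) (h0 : φ xhat = 0)
    (hmin : ∀ z : E, φ z = 0 → ‖xhat - x‖ ≤ ‖z - x‖)
    (L : E →L[ℝ] ℝ) (hL : HasFDerivAt φ L xhat) :
    0 ≤ L (x - xhat) := by
  have hne : xhat ≠ x := by
    intro h; rw [h] at h0; exact absurd h0 (ne_of_gt hx)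
  have hnorm : 0 < ‖xhat - x‖ := by
    rw [norm_pos_iff]
    exact sub_ne_zero.mpr hne
  -- φ is positive on the open ball around x of radius ‖xhat - x‖
  have hball : ∀ z : E, ‖z - x‖ < ‖xhat - x‖ → 0 < φ z := by
    intro z hz
    by_contra hle
    push_neg at hle
    -- intermediate value on the segment from x to z
    have hcont : ContinuousOn (fun s : ℝ => φ (x + s • (z - x))) (Set.Icc 0 1) :=
      (hφc.comp (by continuity)).continuousOn
    have h01 : (0:ℝ) ≤ 1 := zero_le_one
    have hiv := intermediate_value_Icc' h01 hcont
    have hmem : (0:ℝ) ∈ Set.Icc (φ (x + (1:ℝ) • (z - x))) (φ (x + (0:ℝ) • (z - x))) := by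
      simp only [one_smul, zero_smul, add_zero, add_sub_cancel]
      exact ⟨hle, le_of_lt hx⟩
    obtain ⟨s, hs, hfs⟩ := hiv hmem
    have hw := hmin _ hfs
    have : ‖x + s • (z - x) - x‖ = s * ‖z - x‖ := by
      rw [add_sub_cancel_left, norm_smul, Real.norm_eq_abs, abs_of_nonneg hs.1]
    rw [this] at hw
    have : s * ‖z - x‖ ≤ ‖z - x‖ := by
      nlinarith [hs.2, norm_nonneg (z - x)]
    linarith
  -- φ ≥ 0 on the segment from xhat toward x
  have hseg : ∀ t : ℝ, 0 < t → t ≤ 1 → 0 ≤ φ (xhat + t • (x - xhat)) := by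
    intro t ht ht1
    refine le_of_lt (hball _ ?_)
    have : xhat + t • (x - xhat) - x = (1 - t) • (xhat - x) := by
      module
    rw [this, norm_smul, Real.norm_eq_abs, abs_of_nonneg (by linarith)]
    nlinarith
  -- the function g t = φ (xhat + t • (x - xhat)) has derivative L (x - xhat) at 0
  set g : ℝ → ℝ := fun t => φ (xhat + t • (x - xhat)) with hg
  have hlin : HasDerivAt (fun t : ℝ => xhat + t • (x - xhat)) (x - xhat) 0 := by
    simpa using ((hasDerivAt_id (0:ℝ)).smul_const (x - xhat)).const_add xhat
  have hgd : HasDerivAt g (L (x - xhat)) 0 := by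
    have hL' : HasFDerivAt φ L (xhat + (0:ℝ) • (x - xhat)) := by simpa using hL
    have := hL'.comp_hasDerivAt (x := (0:ℝ)) hlin
    exact this
  -- slope tends to L (x - xhat); slopes from the right are nonneg
  have hslope := hasDerivAt_iff_tendsto_slope.mp hgd
  have hslope' : Filter.Tendsto (slope g 0) (nhdsWithin 0 (Set.Ioi 0)) (nhds (L (x - xhat))) :=
    hslope.mono_left (nhdsWithin_mono 0 (fun t ht => ne_of_gt ht))
  refine ge_of_tendsto hslope' ?_
  filter_upwards [Ioc_mem_nhdsGT_of_mem (Set.left_mem_Ico.mpr zero_lt_one)] with t ht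
  have hg0 : g 0 = 0 := by simp [hg, h0]
  have hgt : 0 ≤ g t := hseg t ht.1 ht.2
  rw [slope_def_field]
  have : (g t - g 0) / (t - 0) ≥ 0 := by
    rw [hg0, sub_zero, sub_zero]
    exact div_nonneg hgt (le_of_lt ht.1)
  simpa [div_eq_inv_mul, slope] using this
end
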